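/- For μ, γ in the Gårding cone Γ_k ⊂ ℝⁿ, the inequality k·σ_k(μ)^{1/k}·σ_k(γ)^{(k−1)/k} ≤ Σ_{i=1}^n μᵢ·σ_{k−1,i}(γ) holds, with equality when γ = σ_k(μ)^{−1/k}·μ. -/

import Mathlib

/-- The `j`-th elementary symmetric polynomial of `x : Fin n → ℝ`. -/
def esymm (n j : ℕ) (x : Fin n → ℝ) : ℝ :=
  ∑ s ∈ Finset.powersetCard j (Finset.univ : Finset (Fin n)), ∏ i ∈ s, x i

/-!
On the Gårding cone, `σ_k^{1/k}` is superadditive. This follows from the Marcus–Lopes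
inequality, which says that `σ_j / σ_{j-1}` is superadditive: it is proved by induction on `j`
from the identity `(j + 1) σ_{j+1} = σ_1 σ_j - ∑ λ_i² σ_{j-1,i}` and a Cauchy–Schwarz bound for
each term. Mahler's inequality, applied to the telescoping product `σ_k = ∏ σ_j / σ_{j-1}`, then
gives superadditivity of `σ_k^{1/k}`. The induction needs the fact that deleting a coordinate
maps `Γ_k` into `Γ_{k-1}`. That fact comes from Rolle's theorem applied to `∏ (t + λ_i)` and
its derivatives.

So `ε ↦ σ_k(γ + ε μ) - (σ_k(γ)^{1/k} + ε σ_k(μ)^{1/k})^k` is nonnegative for `ε > 0` and vanishes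
at `0`. Its derivative at `0` is therefore nonnegative, and that derivative is
`∑ μ_i σ_{k-1,i}(γ) - k σ_k(μ)^{1/k} σ_k(γ)^{(k-1)/k}`. For `γ = c μ`, equality follows from
homogeneity and the Euler identity `∑ μ_i σ_{k-1,i}(μ) = k σ_k(μ)`.
-/

open Finset Polynomial

/-- The paper's `σ_{k-1,i}(γ)`, written with `Function.update γ i 0` in the statement, is
`esymmOn (univ.erase i) (k - 1) γ` (see `esymmOn_update_zero`). -/
def esymmOn {ι : Type*} (A : Finset ι) (j : ℕ) (x : ι → ℝ) : ℝ :=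
  ∑ s ∈ A.powersetCard j, ∏ i ∈ s, x i

def gardingCone {ι : Type*} (A : Finset ι) (k : ℕ) : Set (ι → ℝ) :=
  {x | ∀ j, 1 ≤ j → j ≤ k → 0 < esymmOn A j x}

section Combinatorics

variable {ι : Type*} {A : Finset ι} {j : ℕ} {x : ι → ℝ}

@[simp] lemma esymmOn_zero (A : Finset ι) (x : ι → ℝ) : esymmOn A 0 x = 1 := by
  simp [esymmOn]

lemma esymmOn_one (A : Finset ι) (x : ι → ℝ) : esymmOn A 1 x = ∑ i ∈ A, x i := by
  simp [esymmOn, powersetCard_one]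

lemma esymmOn_eq_zero_of_card_lt (h : A.card < j) (x : ι → ℝ) : esymmOn A j x = 0 := by
  simp [esymmOn, powersetCard_eq_empty.2 h]

lemma esymmOn_congr {y : ι → ℝ} (h : ∀ i ∈ A, x i = y i) : esymmOn A j x = esymmOn A j y :=
  sum_congr rfl fun _s hs => prod_congr rfl fun i hi => h i ((mem_powersetCard.1 hs).1 hi)

lemma esymmOn_smul (A : Finset ι) (j : ℕ) (c : ℝ) (x : ι → ℝ) :
    esymmOn A j (c • x) = c ^ j * esymmOn A j x := by
  rw [esymmOn, esymmOn, mul_sum]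
  refine sum_congr rfl fun s hs => ?_
  simp [prod_mul_distrib, (mem_powersetCard.1 hs).2]

lemma esymmOn_pos_of_pos (hx : ∀ i ∈ A, 0 < x i) (hj : j ≤ A.card) : 0 < esymmOn A j x := by
  obtain ⟨t, ht⟩ := powersetCard_nonempty_of_le hj
  refine sum_pos' (fun s hs => prod_nonneg fun i hi => ?_) ⟨t, ht, prod_pos fun i hi => ?_⟩
  · exact (hx i ((mem_powersetCard.1 hs).1 hi)).le
  · exact hx i ((mem_powersetCard.1 ht).1 hi)

variable [DecidableEq ι] {i : ι}

lemma notMem_of_mem_powersetCard_erase {K : ℕ} {t : Finset ι}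
    (ht : t ∈ (A.erase i).powersetCard K) : i ∉ t :=
  fun h => ((mem_powersetCard.1 ht).1 h |> mem_erase.1).1 rfl

lemma sum_powersetCard_succ_filter_mem (hi : i ∈ A) (K : ℕ) (f : Finset ι → ℝ) :
    ∑ s ∈ A.powersetCard (K + 1) with i ∈ s, f s
      = ∑ t ∈ (A.erase i).powersetCard K, f (insert i t) := by
  symm
  refine sum_nbij' (insert i) (fun s => s.erase i) (fun t ht => ?_) (fun s hs => ?_)
    (fun t ht => erase_insert (notMem_of_mem_powersetCard_erase ht))
    (fun s hs => insert_erase (mem_filter.1 hs).2) fun _ _ => rfl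
  · have hit := notMem_of_mem_powersetCard_erase ht
    simp only [mem_powersetCard, subset_erase, mem_filter] at ht ⊢
    exact ⟨⟨insert_subset hi ht.1.1, by rw [card_insert_of_notMem hit, ht.2]⟩, mem_insert_self i t⟩
  · simp only [mem_powersetCard, mem_filter] at hs ⊢
    exact ⟨erase_subset_erase i hs.1.1, by rw [card_erase_of_mem hs.2, hs.1.2, Nat.add_sub_cancel]⟩

lemma esymmOn_succ_of_mem (hi : i ∈ A) (K : ℕ) (x : ι → ℝ) :
    esymmOn A (K + 1) x = esymmOn (A.erase i) (K + 1) x + x i * esymmOn (A.erase i) K x := by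
  have hnot : {s ∈ A.powersetCard (K + 1) | i ∉ s} = (A.erase i).powersetCard (K + 1) := by
    ext s
    simp only [mem_filter, mem_powersetCard, subset_erase]
    tauto
  rw [esymmOn, ← sum_filter_not_add_sum_filter _ (i ∈ ·), hnot,
    sum_powersetCard_succ_filter_mem hi, esymmOn, esymmOn, mul_sum]
  congr 1
  exact sum_congr rfl fun t ht => prod_insert (notMem_of_mem_powersetCard_erase ht)

lemma esymmOn_update_zero (A : Finset ι) (j : ℕ) (x : ι → ℝ) (i : ι) :
    esymmOn A j (Function.update x i 0) = esymmOn (A.erase i) j x := by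
  have hcongr : esymmOn (A.erase i) j (Function.update x i 0) = esymmOn (A.erase i) j x :=
    esymmOn_congr fun l hl => Function.update_of_ne (ne_of_mem_erase hl) _ _
  by_cases hi : i ∈ A
  · rcases j with _ | K
    · simp
    · rw [esymmOn_succ_of_mem hi, hcongr]
      simp
  · rw [← hcongr, erase_eq_of_notMem hi]

lemma sum_sum_mul_prod_erase (A : Finset ι) (K : ℕ) (g x : ι → ℝ) :
    ∑ s ∈ A.powersetCard (K + 1), ∑ i ∈ s, g i * ∏ l ∈ s.erase i, x l
      = ∑ i ∈ A, g i * esymmOn (A.erase i) K x := by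
  rw [sum_comm' (t' := A) (s' := fun i => {s ∈ A.powersetCard (K + 1) | i ∈ s})]
  · refine sum_congr rfl fun i hi => ?_
    rw [sum_powersetCard_succ_filter_mem hi, esymmOn, mul_sum]
    refine sum_congr rfl fun t ht => ?_
    rw [erase_insert (notMem_of_mem_powersetCard_erase ht)]
  · intro s i
    simp only [mem_powersetCard, mem_filter]
    exact ⟨fun h => ⟨h, h.1.1 h.2⟩, fun h => h.1⟩

lemma sum_mul_esymmOn_erase (A : Finset ι) (K : ℕ) (x : ι → ℝ) :
    ∑ i ∈ A, x i * esymmOn (A.erase i) K x = (K + 1 : ℝ) * esymmOn A (K + 1) x := by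
  rw [← sum_sum_mul_prod_erase, esymmOn, mul_sum]
  refine sum_congr rfl fun s hs => ?_
  rw [sum_congr rfl fun i hi => mul_prod_erase s x hi, sum_const, (mem_powersetCard.1 hs).2,
    nsmul_eq_mul]
  push_cast
  ring

end Combinatorics

namespace Polynomial

theorem Splits.derivative {p : ℝ[X]} (hp : p.Splits) : p.derivative.Splits := by
  rw [splits_iff_card_roots] at hp ⊢
  have hle := card_roots' p.derivative
  have hrolle := card_roots_le_derivative p
  rw [natDegree_derivative] at hle ⊢
  omega

theorem Splits.iterate_derivative {p : ℝ[X]} (hp : p.Splits) (m : ℕ) :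
    (Polynomial.derivative^[m] p).Splits := by
  induction m with
  | zero => exact hp
  | succ m ih => rw [Function.iterate_succ_apply']; exact ih.derivative

theorem natDegree_iterate_derivative_eq (p : ℝ[X]) (m : ℕ) :
    (derivative^[m] p).natDegree = p.natDegree - m := by
  induction m with
  | zero => rfl
  | succ m ih => rw [Function.iterate_succ_apply', natDegree_derivative, ih, Nat.sub_sub]

theorem leadingCoeff_iterate_derivative_pos {p : ℝ[X]} (hp : 0 < p.leadingCoeff) {m : ℕ}
    (hm : m ≤ p.natDegree) : 0 < (derivative^[m] p).leadingCoeff := by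
  induction m with
  | zero => exact hp
  | succ m ih =>
    rw [Function.iterate_succ_apply', leadingCoeff_derivative, natDegree_iterate_derivative_eq]
    exact mul_pos (ih (by omega)) (by exact_mod_cast Nat.sub_pos_of_lt hm)

theorem eval_iterate_derivative_X_add_C_mul (c : ℝ) (B : ℝ[X]) (m : ℕ) (t : ℝ) :
    (derivative^[m] ((X + C c) * B)).eval t
      = (t + c) * (derivative^[m] B).eval t + m * (derivative^[m - 1] B).eval t := by
  rw [add_mul, mul_comm X, iterate_map_add, iterate_derivative_mul_X, iterate_derivative_C_mul]
  simp only [eval_add, eval_mul, eval_X, eval_C, nsmul_eq_mul, eval_natCast]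
  ring

theorem eval_pos_of_coeff_nonneg {Q : ℝ[X]} (h0 : 0 < Q.coeff 0) (h : ∀ r, 0 ≤ Q.coeff r)
    {t : ℝ} (ht : 0 ≤ t) : 0 < Q.eval t := by
  rw [eval_eq_sum_range]
  calc (0 : ℝ) < Q.coeff 0 * t ^ 0 := by simpa using h0
    _ ≤ _ := single_le_sum (f := fun i => Q.coeff i * t ^ i)
        (fun i _ => mul_nonneg (h i) (pow_nonneg ht i)) (by simp)

theorem exists_isRoot_forall_lt_eval_pos {u : ℝ[X]} (hdeg : 0 < u.degree)
    (hlead : 0 ≤ u.leadingCoeff) {t₀ : ℝ} (h : u.eval t₀ ≤ 0) :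
    ∃ ρ, t₀ ≤ ρ ∧ u.IsRoot ρ ∧ ∀ t, ρ < t → 0 < u.eval t := by
  have hu : u ≠ 0 := ne_zero_of_degree_gt hdeg
  have root_ge : ∀ t, u.eval t ≤ 0 → ∃ r ∈ u.roots.toFinset, t ≤ r := by
    intro t ht
    obtain ⟨T, hT, htT⟩ := ((u.tendsto_atTop_of_leadingCoeff_nonneg hdeg hlead).eventually_gt_atTop
      0 |>.and (Filter.eventually_ge_atTop t)).exists
    obtain ⟨r, hr, hr0⟩ := intermediate_value_Icc htT u.continuous.continuousOn ⟨ht, hT.le⟩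
    exact ⟨r, by simpa [mem_roots hu] using hr0, hr.1⟩
  obtain ⟨r, hr, ht₀r⟩ := root_ge t₀ h
  let ρ := u.roots.toFinset.max' ⟨r, hr⟩
  have hρ : ρ ∈ u.roots.toFinset := max'_mem _ _
  refine ⟨ρ, ht₀r.trans (le_max' _ r hr), ((mem_roots hu).1 (Multiset.mem_toFinset.1 hρ)), ?_⟩
  intro t hρt
  by_contra! ht
  obtain ⟨r', hr', htr'⟩ := root_ge t ht
  exact absurd (le_max' _ r' hr') (not_le.2 (hρt.trans_le htr'))

theorem Splits.eval_nonpos_of_isRoot_derivative {v : ℝ[X]} (hs : v.Splits) {ρ : ℝ}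
    (hρ : v.derivative.IsRoot ρ) (hgt : ∀ t, ρ < t → 0 < v.derivative.eval t) :
    v.eval ρ ≤ 0 := by
  -- `v` increases beyond `ρ`, so if `v ρ > 0` all roots lie below `ρ` and then
  -- `v' ρ = v ρ * ∑ 1 / (ρ - z) > 0`
  by_contra! hpos
  have hmono : StrictMonoOn v.eval (Set.Ici ρ) := by
    refine strictMonoOn_of_deriv_pos (convex_Ici ρ) v.continuous.continuousOn fun t ht => ?_
    rw [interior_Ici] at ht
    simpa using hgt t ht
  have hroots : ∀ z ∈ v.roots, z < ρ := by
    intro z hz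
    by_contra! hρz
    have hvz := hmono.monotoneOn Set.self_mem_Ici hρz hρz
    linarith [(mem_roots'.1 hz).2.eq_zero]
  have hne : v.roots ≠ 0 := by
    intro h0
    have hdeg : v.natDegree = 0 := by rw [← splits_iff_card_roots.1 hs, h0, Multiset.card_zero]
    have hpos' := hgt (ρ + 1) (by linarith)
    rw [derivative_of_natDegree_zero hdeg, eval_zero] at hpos'
    exact lt_irrefl 0 hpos'
  have hsum : 0 < (v.roots.map fun z => 1 / (ρ - z)).sum := by
    simpa using Multiset.sum_lt_sum_of_nonempty (f := fun _ => (0 : ℝ)) hne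
      fun z hz => one_div_pos.2 (sub_pos.2 (hroots z hz))
  have hderiv := hs.eval_derivative_eq_eval_mul_sum hpos.ne'
  rw [hρ.eq_zero] at hderiv
  exact (mul_pos hpos hsum).ne hderiv
  
end Polynomial

lemma add_sq_div_le_of_add_le {a b u v w : ℝ} (hu : 0 < u) (hv : 0 < v) (hw : u + v ≤ w) :
    (a + b) ^ 2 / w ≤ a ^ 2 / u + b ^ 2 / v := by
  have hw0 : 0 < w := (add_pos hu hv).trans_le hw
  rw [div_add_div _ _ hu.ne' hv.ne', div_le_div_iff₀ hw0 (mul_pos hu hv)]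
  nlinarith [sq_nonneg (a * v - b * u),
    mul_nonneg (add_nonneg (mul_nonneg (sq_nonneg a) hv.le) (mul_nonneg (sq_nonneg b) hu.le))
      (sub_nonneg.2 hw)]

/-- Mahler's inequality. -/
theorem Real.prod_rpow_add_prod_rpow_le {ι : Type*} {s : Finset ι} (hs : s.Nonempty)
    {a b : ι → ℝ} (ha : ∀ i ∈ s, 0 < a i) (hb : ∀ i ∈ s, 0 < b i) :
    (∏ i ∈ s, a i) ^ (1 / (s.card : ℝ)) + (∏ i ∈ s, b i) ^ (1 / (s.card : ℝ))
      ≤ (∏ i ∈ s, (a i + b i)) ^ (1 / (s.card : ℝ)) := by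
  set w : ι → ℝ := fun _ => 1 / (s.card : ℝ)
  have hw : ∑ i ∈ s, w i = 1 := by
    simp [w, (card_pos.2 hs).ne']
  have hab : ∀ i ∈ s, 0 < a i + b i := fun i hi => add_pos (ha i hi) (hb i hi)
  have hP : 0 < (∏ i ∈ s, (a i + b i)) ^ (1 / (s.card : ℝ)) :=
    Real.rpow_pos_of_pos (prod_pos hab) _
  -- AM-GM for the fractions `a i / (a i + b i)` and `b i / (a i + b i)`, which add up to `1`
  have amgm : ∀ c : ι → ℝ, (∀ i ∈ s, 0 < c i) →
      (∏ i ∈ s, c i) ^ (1 / (s.card : ℝ)) / (∏ i ∈ s, (a i + b i)) ^ (1 / (s.card : ℝ))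
        ≤ ∑ i ∈ s, w i * (c i / (a i + b i)) := fun c hc => by
    rw [← Real.div_rpow (prod_nonneg fun i hi => (hc i hi).le)
        (prod_nonneg fun i hi => (hab i hi).le), ← prod_div_distrib,
      ← Real.finsetProd_rpow _ _ fun i hi => div_nonneg (hc i hi).le (hab i hi).le]
    exact Real.geom_mean_le_arith_mean_weighted s w _ (fun i _ => by positivity) hw
      fun i hi => div_nonneg (hc i hi).le (hab i hi).le
  have hsum : ∑ i ∈ s, w i * (a i / (a i + b i)) + ∑ i ∈ s, w i * (b i / (a i + b i)) = 1 := by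
    rw [← sum_add_distrib, ← hw]
    refine sum_congr rfl fun i hi => ?_
    rw [← mul_add, ← add_div, div_self (hab i hi).ne', mul_one]
  have h := add_le_add (amgm a ha) (amgm b hb)
  rwa [hsum, ← add_div, div_le_one hP] at h

theorem HasDerivAt.nonneg_of_le_right {f : ℝ → ℝ} {f' a : ℝ} (hf : HasDerivAt f f' a)
    (h : ∀ t, a < t → f a ≤ f t) : 0 ≤ f' := by
  refine ge_of_tendsto (hf.tendsto_slope.mono_left (nhdsGT_le_nhdsNE a)) ?_
  filter_upwards [self_mem_nhdsWithin] with t ht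
  rw [slope_def_field]
  exact div_nonneg (sub_nonneg.2 (h t ht)) (sub_nonneg.2 (le_of_lt ht))

section GardingCone

variable {ι : Type*} {A : Finset ι} {j k : ℕ} {x : ι → ℝ}

lemma gardingCone_mono (h : j ≤ k) : gardingCone A k ⊆ gardingCone A j :=
  fun _ hx m hm hmj => hx m hm (hmj.trans h)

lemma esymmOn_pos_of_mem_gardingCone (hx : x ∈ gardingCone A k) (hj : j ≤ k) :
    0 < esymmOn A j x := by
  rcases Nat.eq_zero_or_pos j with rfl | hj0
  · simp
  · exact hx j hj0 hj

lemma card_le_of_mem_gardingCone (hx : x ∈ gardingCone A k) : k ≤ A.card := by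
  by_contra! h
  have hpos := esymmOn_pos_of_mem_gardingCone hx le_rfl
  rw [esymmOn_eq_zero_of_card_lt h] at hpos
  exact lt_irrefl 0 hpos

lemma smul_mem_gardingCone {c : ℝ} (hc : 0 < c) (hx : x ∈ gardingCone A k) :
    c • x ∈ gardingCone A k := fun m hm hmk => by
  rw [esymmOn_smul]
  exact mul_pos (pow_pos hc m) (hx m hm hmk)

lemma prod_range_esymmOn_div (hx : x ∈ gardingCone A k) :
    ∏ j ∈ range k, esymmOn A (j + 1) x / esymmOn A j x = esymmOn A k x := by
  induction k with
  | zero => simp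
  | succ k ih =>
    rw [prod_range_succ, ih (gardingCone_mono (Nat.le_succ k) hx),
      mul_div_cancel₀ _ (esymmOn_pos_of_mem_gardingCone hx (Nat.le_succ k)).ne']

lemma natDegree_iterate_derivative_prod_X_add_C (A : Finset ι) (x : ι → ℝ) (m : ℕ) :
    (derivative^[m] (∏ l ∈ A, (X + C (x l)))).natDegree = A.card - m := by
  rw [natDegree_iterate_derivative_eq, natDegree_prod_of_monic _ _ fun l _ => monic_X_add_C (x l)]
  simp

lemma leadingCoeff_iterate_derivative_prod_X_add_C_pos (A : Finset ι) (x : ι → ℝ) {m : ℕ}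
    (hm : m ≤ A.card) : 0 < (derivative^[m] (∏ l ∈ A, (X + C (x l)))).leadingCoeff := by
  refine leadingCoeff_iterate_derivative_pos ?_
    (by simpa using (natDegree_iterate_derivative_prod_X_add_C A x 0).ge.trans' hm)
  rw [(monic_prod_of_monic _ _ fun l _ => monic_X_add_C (x l)).leadingCoeff]
  exact one_pos

lemma coeff_iterate_derivative_prod_X_add_C (A : Finset ι) (x : ι → ℝ) {m r : ℕ}
    (h : r + m ≤ A.card) :
    (derivative^[m] (∏ l ∈ A, (X + C (x l)))).coeff r
      = (r + m).descFactorial m * esymmOn A (A.card - (r + m)) x := by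
  rw [coeff_iterate_derivative, prod_X_add_C_coeff A x h, nsmul_eq_mul]
  rfl

lemma eval_iterate_derivative_prod_X_add_C_pos (hx : x ∈ gardingCone A k) {m : ℕ}
    (hm : m ≤ A.card) (hmk : A.card ≤ k + m) {t : ℝ} (ht : 0 ≤ t) :
    0 < (derivative^[m] (∏ l ∈ A, (X + C (x l)))).eval t := by
  refine eval_pos_of_coeff_nonneg ?_ (fun r => ?_) ht
  · rw [coeff_iterate_derivative_prod_X_add_C A x (by omega), zero_add, Nat.descFactorial_self]
    exact mul_pos (by positivity) (esymmOn_pos_of_mem_gardingCone hx (by omega))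
  rcases le_or_gt (r + m) A.card with hr | hr
  · rw [coeff_iterate_derivative_prod_X_add_C A x hr]
    exact mul_nonneg (Nat.cast_nonneg _) (esymmOn_pos_of_mem_gardingCone hx (by omega)).le
  · rw [coeff_eq_zero_of_natDegree_lt (by rw [natDegree_iterate_derivative_prod_X_add_C]; omega)]

lemma pos_of_mem_gardingCone_card (hx : x ∈ gardingCone A A.card) {l : ι} (hl : l ∈ A) :
    0 < x l := by
  by_contra! hxl
  have hpos := eval_iterate_derivative_prod_X_add_C_pos hx (Nat.zero_le _) le_rfl (neg_nonneg.2 hxl)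
  rw [Function.iterate_zero_apply, eval_prod, prod_eq_zero hl (by simp)] at hpos
  exact lt_irrefl 0 hpos

theorem esymmOn_erase_pos [DecidableEq ι] {K : ℕ} (hx : x ∈ gardingCone A (K + 1)) {i : ι}
    (hi : i ∈ A) : 0 < esymmOn (A.erase i) K x := by
  rcases Nat.eq_zero_or_pos K with rfl | hK
  · simp
  have hKN : K + 1 ≤ A.card := card_le_of_mem_gardingCone hx
  have hcard : (A.erase i).card = A.card - 1 := card_erase_of_mem hi
  rcases hKN.eq_or_lt with hN | hN
  · rw [hN] at hx
    exact esymmOn_pos_of_pos (fun l hl => pos_of_mem_gardingCone_card hx (mem_of_mem_erase hl))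
      (by omega)
  /- With `m = |A| - (K + 1)`, the `m`-th derivative of `∏_{l ∈ A} (X + x l)` is
  `(X + x i) u + m v`, where `u = v'` are derivatives of the product over `A - i`. At the last
  root `ρ ≥ 0` of `u` the former is positive while `v ρ ≤ 0`. -/
  by_contra! hneg
  set m := A.card - (K + 1)
  set B := ∏ l ∈ A.erase i, (X + C (x l))
  set u := derivative^[m] B
  set v := derivative^[m - 1] B
  have huv : u = derivative v := by
    rw [← Function.iterate_succ_apply' derivative, Nat.succ_eq_add_one,
      Nat.sub_add_cancel (by omega : 1 ≤ m)]
  have hu0 : u.eval 0 ≤ 0 := by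
    rw [← coeff_zero_eq_eval_zero, coeff_iterate_derivative_prod_X_add_C _ x (by omega),
      zero_add, show (A.erase i).card - m = K by omega]
    exact mul_nonpos_of_nonneg_of_nonpos (Nat.cast_nonneg _) hneg
  have hudeg : 0 < u.degree := by
    rw [← natDegree_pos_iff_degree_pos, natDegree_iterate_derivative_prod_X_add_C]
    omega
  obtain ⟨ρ, hρ0, hρ, hgt⟩ := exists_isRoot_forall_lt_eval_pos hudeg
    (leadingCoeff_iterate_derivative_prod_X_add_C_pos _ x (by omega)).le hu0
  rw [huv] at hρ hgt
  have hv : v.eval ρ ≤ 0 :=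
    ((Splits.prod fun l _ => Splits.X_add_C (x l)).iterate_derivative (m - 1)
      |>.eval_nonpos_of_isRoot_derivative hρ hgt)
  have hQ := eval_iterate_derivative_prod_X_add_C_pos hx (m := m) (by omega) (by omega) hρ0
  rw [← mul_prod_erase A _ hi, eval_iterate_derivative_X_add_C_mul] at hQ
  change 0 < (ρ + x i) * u.eval ρ + m * v.eval ρ at hQ
  rw [huv, hρ.eq_zero, mul_zero, zero_add] at hQ
  exact (mul_nonpos_of_nonneg_of_nonpos (Nat.cast_nonneg m) hv).not_gt hQ

lemma mem_gardingCone_erase [DecidableEq ι] (hx : x ∈ gardingCone A (k + 1)) {i : ι}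
    (hi : i ∈ A) : x ∈ gardingCone (A.erase i) k :=
  fun _ _ hjk => esymmOn_erase_pos (gardingCone_mono (by omega) hx) hi

end GardingCone

section Superadditivity

variable {ι : Type*} [DecidableEq ι] {A : Finset ι} {k : ℕ} {x y : ι → ℝ}

lemma sum_sq_mul_esymmOn_erase_add (A : Finset ι) (K : ℕ) (w : ι → ℝ) :
    ∑ i ∈ A, w i ^ 2 * esymmOn (A.erase i) K w + (K + 2 : ℝ) * esymmOn A (K + 2) w
      = esymmOn A 1 w * esymmOn A (K + 1) w := by
  have hsplit : ∀ i ∈ A, w i * esymmOn (A.erase i) (K + 1) w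
      = w i * esymmOn A (K + 1) w - w i ^ 2 * esymmOn (A.erase i) K w := fun i hi => by
    rw [esymmOn_succ_of_mem hi K w]
    ring
  have euler := sum_mul_esymmOn_erase A (K + 1) w
  rw [sum_congr rfl hsplit, sum_sub_distrib, ← sum_mul, ← esymmOn_one] at euler
  push_cast at euler
  linarith

lemma succ_succ_mul_esymmOn_div (A : Finset ι) (K : ℕ) {w : ι → ℝ}
    (hw : esymmOn A (K + 1) w ≠ 0) :
    (K + 2 : ℝ) * (esymmOn A (K + 2) w / esymmOn A (K + 1) w)
      = esymmOn A 1 w - ∑ i ∈ A, w i ^ 2 / (esymmOn A (K + 1) w / esymmOn (A.erase i) K w) := by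
  simp only [div_div_eq_mul_div, ← sum_div]
  rw [eq_sub_iff_add_eq, ← mul_div_assoc, ← add_div, div_eq_iff hw, add_comm,
    sum_sq_mul_esymmOn_erase_add]

lemma sq_div_esymmOn_div_erase_le {i : ι} (hi : i ∈ A) {K : ℕ}
    (hx : x ∈ gardingCone (A.erase i) (K + 1)) (hy : y ∈ gardingCone (A.erase i) (K + 1))
    (hxy : x + y ∈ gardingCone (A.erase i) (K + 1))
    (hratio : esymmOn (A.erase i) (K + 1) x / esymmOn (A.erase i) K x
        + esymmOn (A.erase i) (K + 1) y / esymmOn (A.erase i) K y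
      ≤ esymmOn (A.erase i) (K + 1) (x + y) / esymmOn (A.erase i) K (x + y))
    (hxA : 0 < esymmOn A (K + 1) x) (hyA : 0 < esymmOn A (K + 1) y) :
    (x + y) i ^ 2 / (esymmOn A (K + 1) (x + y) / esymmOn (A.erase i) K (x + y))
      ≤ x i ^ 2 / (esymmOn A (K + 1) x / esymmOn (A.erase i) K x)
        + y i ^ 2 / (esymmOn A (K + 1) y / esymmOn (A.erase i) K y) := by
  have hsplit : ∀ w ∈ gardingCone (A.erase i) (K + 1),
      esymmOn A (K + 1) w / esymmOn (A.erase i) K w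
        = w i + esymmOn (A.erase i) (K + 1) w / esymmOn (A.erase i) K w := fun w hw => by
    rw [esymmOn_succ_of_mem hi, add_div, mul_div_assoc,
      div_self (esymmOn_pos_of_mem_gardingCone hw (Nat.le_succ K)).ne', mul_one, add_comm]
  refine add_sq_div_le_of_add_le
    (div_pos hxA (esymmOn_pos_of_mem_gardingCone hx (Nat.le_succ K)))
    (div_pos hyA (esymmOn_pos_of_mem_gardingCone hy (Nat.le_succ K))) ?_
  rw [hsplit x hx, hsplit y hy, hsplit _ hxy, Pi.add_apply]
  linarith

lemma esymmOn_div_add_le_succ (K : ℕ)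
    (ih : ∀ B : Finset ι, ∀ x y, x ∈ gardingCone B (K + 1) → y ∈ gardingCone B (K + 1) →
      x + y ∈ gardingCone B (K + 1) ∧ esymmOn B (K + 1) x / esymmOn B K x
        + esymmOn B (K + 1) y / esymmOn B K y ≤ esymmOn B (K + 1) (x + y) / esymmOn B K (x + y))
    (hx : x ∈ gardingCone A (K + 2)) (hy : y ∈ gardingCone A (K + 2)) :
    x + y ∈ gardingCone A (K + 2) ∧ esymmOn A (K + 2) x / esymmOn A (K + 1) x
        + esymmOn A (K + 2) y / esymmOn A (K + 1) y
      ≤ esymmOn A (K + 2) (x + y) / esymmOn A (K + 1) (x + y) := by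
  have hxK := esymmOn_pos_of_mem_gardingCone hx (Nat.le_succ (K + 1))
  have hyK := esymmOn_pos_of_mem_gardingCone hy (Nat.le_succ (K + 1))
  have hxy := (ih A x y (gardingCone_mono (by omega) hx) (gardingCone_mono (by omega) hy)).1
  have hxyK := esymmOn_pos_of_mem_gardingCone hxy le_rfl
  have hterm : ∀ i ∈ A,
      (x + y) i ^ 2 / (esymmOn A (K + 1) (x + y) / esymmOn (A.erase i) K (x + y))
        ≤ x i ^ 2 / (esymmOn A (K + 1) x / esymmOn (A.erase i) K x)
          + y i ^ 2 / (esymmOn A (K + 1) y / esymmOn (A.erase i) K y) := fun i hi => by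
    obtain ⟨hxyi, hratio⟩ := ih (A.erase i) x y (mem_gardingCone_erase hx hi)
      (mem_gardingCone_erase hy hi)
    exact sq_div_esymmOn_div_erase_le hi (mem_gardingCone_erase hx hi)
      (mem_gardingCone_erase hy hi) hxyi hratio hxK hyK
  have hsum := sum_le_sum hterm
  have hone : esymmOn A 1 (x + y) = esymmOn A 1 x + esymmOn A 1 y := by
    simp only [esymmOn_one, Pi.add_apply, sum_add_distrib]
  have hratio : esymmOn A (K + 2) x / esymmOn A (K + 1) x
      + esymmOn A (K + 2) y / esymmOn A (K + 1) y
      ≤ esymmOn A (K + 2) (x + y) / esymmOn A (K + 1) (x + y) := by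
    refine le_of_mul_le_mul_left ?_ (by positivity : (0 : ℝ) < K + 2)
    rw [mul_add, succ_succ_mul_esymmOn_div A K hxK.ne', succ_succ_mul_esymmOn_div A K hyK.ne',
      succ_succ_mul_esymmOn_div A K hxyK.ne', hone]
    rw [sum_add_distrib] at hsum
    linarith
  refine ⟨fun j hj hjK => ?_, hratio⟩
  rcases Nat.lt_or_eq_of_le hjK with hjK | rfl
  · exact hxy j hj (by omega)
  · have hpos : 0 < esymmOn A (K + 2) (x + y) / esymmOn A (K + 1) (x + y) :=
      (add_pos (div_pos (hx _ hj le_rfl) hxK) (div_pos (hy _ hj le_rfl) hyK)).trans_le hratio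
    exact (div_pos_iff_of_pos_right hxyK).1 hpos

/-- The Marcus–Lopes inequality. -/
theorem esymmOn_div_add_le (K : ℕ) (A : Finset ι) (x y : ι → ℝ)
    (hx : x ∈ gardingCone A (K + 1)) (hy : y ∈ gardingCone A (K + 1)) :
    x + y ∈ gardingCone A (K + 1) ∧ esymmOn A (K + 1) x / esymmOn A K x
        + esymmOn A (K + 1) y / esymmOn A K y
      ≤ esymmOn A (K + 1) (x + y) / esymmOn A K (x + y) := by
  induction K generalizing A x y with
  | zero =>
    have hone : esymmOn A 1 (x + y) = esymmOn A 1 x + esymmOn A 1 y := by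
      simp only [esymmOn_one, Pi.add_apply, sum_add_distrib]
    refine ⟨fun j hj hj1 => ?_, by simp [hone]⟩
    obtain rfl : j = 1 := by omega
    rw [hone]
    exact add_pos (hx 1 le_rfl le_rfl) (hy 1 le_rfl le_rfl)
  | succ K ih => exact esymmOn_div_add_le_succ K ih hx hy

theorem esymmOn_rpow_add_le (hk : 1 ≤ k) (hx : x ∈ gardingCone A k)
    (hy : y ∈ gardingCone A k) :
    esymmOn A k x ^ (1 / (k : ℝ)) + esymmOn A k y ^ (1 / (k : ℝ))
      ≤ esymmOn A k (x + y) ^ (1 / (k : ℝ)) := by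
  obtain ⟨K, rfl⟩ : ∃ K, k = K + 1 := ⟨k - 1, by omega⟩
  have hxy := (esymmOn_div_add_le K A x y hx hy).1
  have ratio_pos : ∀ w ∈ gardingCone A (K + 1), ∀ j ∈ range (K + 1),
      0 < esymmOn A (j + 1) w / esymmOn A j w := fun w hw j hj =>
    div_pos (hw _ (Nat.le_add_left 1 j) (mem_range.1 hj))
      (esymmOn_pos_of_mem_gardingCone hw (mem_range.1 hj).le)
  rw [← prod_range_esymmOn_div hx, ← prod_range_esymmOn_div hy, ← prod_range_esymmOn_div hxy]
  have hmahler := Real.prod_rpow_add_prod_rpow_le nonempty_range_add_one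
    (ratio_pos x hx) (ratio_pos y hy)
  rw [card_range] at hmahler
  refine hmahler.trans (Real.rpow_le_rpow (prod_nonneg fun j hj =>
    (add_pos (ratio_pos x hx j hj) (ratio_pos y hy j hj)).le) ?_ (by positivity))
  refine prod_le_prod (fun j hj => (add_pos (ratio_pos x hx j hj) (ratio_pos y hy j hj)).le)
    fun j hj => ?_
  have hj := mem_range.1 hj
  exact (esymmOn_div_add_le j A x y (gardingCone_mono hj hx) (gardingCone_mono hj hy)).2

end Superadditivity

section Polarization

variable {ι : Type*} [DecidableEq ι] {A : Finset ι} {k : ℕ} {μ γ : ι → ℝ}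

theorem hasDerivAt_esymmOn_add_smul (A : Finset ι) (K : ℕ) (γ μ : ι → ℝ) (t : ℝ) :
    HasDerivAt (fun s => esymmOn A (K + 1) (γ + s • μ))
      (∑ i ∈ A, μ i * esymmOn (A.erase i) K (γ + t • μ)) t := by
  rw [← sum_sum_mul_prod_erase]
  refine HasDerivAt.fun_sum fun s _ => ?_
  have hf : ∀ i ∈ s, HasDerivAt (fun r => γ i + r * μ i) (μ i) t := fun i _ => by
    simpa using ((hasDerivAt_id t).mul_const (μ i)).const_add (γ i)
  refine (HasDerivAt.fun_finsetProd hf).congr_deriv ?_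
  simp only [Pi.add_apply, Pi.smul_apply, smul_eq_mul, mul_comm]

theorem mul_esymmOn_rpow_le_sum (hk : 1 ≤ k) (hμ : μ ∈ gardingCone A k)
    (hγ : γ ∈ gardingCone A k) :
    (k : ℝ) * esymmOn A k μ ^ (1 / (k : ℝ)) * esymmOn A k γ ^ (((k : ℝ) - 1) / (k : ℝ))
      ≤ ∑ i ∈ A, μ i * esymmOn (A.erase i) (k - 1) γ := by
  obtain ⟨K, rfl⟩ : ∃ K, k = K + 1 := ⟨k - 1, by omega⟩
  set a := esymmOn A (K + 1) γ ^ (1 / ((K + 1 : ℕ) : ℝ))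
  set b := esymmOn A (K + 1) μ ^ (1 / ((K + 1 : ℕ) : ℝ))
  have hγK := esymmOn_pos_of_mem_gardingCone hγ le_rfl
  have hμK := esymmOn_pos_of_mem_gardingCone hμ le_rfl
  have root_pow : ∀ w : ι → ℝ, 0 ≤ esymmOn A (K + 1) w →
      (esymmOn A (K + 1) w ^ (1 / ((K + 1 : ℕ) : ℝ))) ^ (K + 1) = esymmOn A (K + 1) w :=
    fun w hw => by rw [one_div, Real.rpow_inv_natCast_pow hw (Nat.succ_ne_zero K)]
  set f : ℝ → ℝ := fun s => esymmOn A (K + 1) (γ + s • μ) - (a + s * b) ^ (K + 1)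
  have hf : HasDerivAt f (∑ i ∈ A, μ i * esymmOn (A.erase i) K γ - (K + 1) * a ^ K * b) 0 := by
    have hpow := (((hasDerivAt_id (0 : ℝ)).mul_const b).const_add a).pow (K + 1)
    refine ((hasDerivAt_esymmOn_add_smul A K γ μ 0).sub hpow).congr_deriv ?_
    simp
  have hmin : ∀ t, 0 < t → f 0 ≤ f t := fun t ht => by
    have hsup := esymmOn_rpow_add_le (Nat.le_add_left 1 K) hγ (smul_mem_gardingCone ht hμ)
    rw [esymmOn_smul, Real.mul_rpow (by positivity) hμK.le, one_div,
      Real.pow_rpow_inv_natCast ht.le (Nat.succ_ne_zero K), ← one_div] at hsup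
    have hz := (esymmOn_div_add_le K A γ (t • μ) hγ (smul_mem_gardingCone ht hμ)).1
    have hpow := pow_le_pow_left₀ (by positivity) hsup (K + 1)
    rw [root_pow _ (esymmOn_pos_of_mem_gardingCone hz le_rfl).le] at hpow
    change esymmOn A (K + 1) (γ + (0 : ℝ) • μ) - (a + 0 * b) ^ (K + 1)
      ≤ esymmOn A (K + 1) (γ + t • μ) - (a + t * b) ^ (K + 1)
    rw [zero_smul, add_zero, zero_mul, add_zero, root_pow γ hγK.le, sub_self, sub_nonneg]
    exact hpow
  have hD := hf.nonneg_of_le_right hmin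
  have ha : a ^ K = esymmOn A (K + 1) γ ^ ((((K + 1 : ℕ) : ℝ) - 1) / ((K + 1 : ℕ) : ℝ)) := by
    rw [← Real.rpow_natCast, ← Real.rpow_mul hγK.le]
    congr 1
    push_cast
    ring
  rw [Nat.add_sub_cancel, ← ha]
  push_cast
  linarith

theorem mul_esymmOn_rpow_eq_sum_of_eq_smul (hk : 1 ≤ k) (hμ : 0 < esymmOn A k μ) {c : ℝ}
    (hc : 0 ≤ c) :
    (k : ℝ) * esymmOn A k μ ^ (1 / (k : ℝ)) * esymmOn A k (c • μ) ^ (((k : ℝ) - 1) / (k : ℝ))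
      = ∑ i ∈ A, μ i * esymmOn (A.erase i) (k - 1) (c • μ) := by
  obtain ⟨K, rfl⟩ : ∃ K, k = K + 1 := ⟨k - 1, by omega⟩
  set S := esymmOn A (K + 1) μ
  have hK : ((K + 1 : ℕ) : ℝ) ≠ 0 := Nat.cast_ne_zero.2 (Nat.succ_ne_zero K)
  have hcpow : (c ^ (K + 1)) ^ ((((K + 1 : ℕ) : ℝ) - 1) / ((K + 1 : ℕ) : ℝ)) = c ^ K := by
    rw [← Real.rpow_natCast c, ← Real.rpow_mul hc, mul_div_cancel₀ _ hK, Nat.cast_add_one,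
      add_sub_cancel_right, Real.rpow_natCast]
  have hSpow : S ^ (1 / ((K + 1 : ℕ) : ℝ)) * S ^ ((((K + 1 : ℕ) : ℝ) - 1) / ((K + 1 : ℕ) : ℝ))
      = S := by
    rw [← Real.rpow_add hμ, ← add_div, add_sub_cancel, div_self hK, Real.rpow_one]
  simp only [esymmOn_smul, Nat.add_sub_cancel, mul_left_comm (μ _), ← mul_sum,
    sum_mul_esymmOn_erase]
  rw [Real.mul_rpow (by positivity) hμ.le, hcpow]
  push_cast at hSpow ⊢
  linear_combination ((K : ℝ) + 1) * c ^ K * hSpow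

end Polarization

theorem stmt_14_general (n k : ℕ) (hk2 : 2 ≤ k) (μ γ : Fin n → ℝ)
    (hμ : ∀ j, 1 ≤ j → j ≤ k → 0 < esymm n j μ)
    (hγ : ∀ j, 1 ≤ j → j ≤ k → 0 < esymm n j γ) :
    (k : ℝ) * esymm n k μ ^ (1 / (k : ℝ)) * esymm n k γ ^ (((k : ℝ) - 1) / (k : ℝ))
      ≤ ∑ i, μ i * esymm n (k - 1) (Function.update γ i 0) ∧
    (γ = (fun i => esymm n k μ ^ (-(1 / (k : ℝ))) * μ i) →
      (k : ℝ) * esymm n k μ ^ (1 / (k : ℝ)) * esymm n k γ ^ (((k : ℝ) - 1) / (k : ℝ))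
        = ∑ i, μ i * esymm n (k - 1) (Function.update γ i 0)) := by
  have hupdate : ∀ (x : Fin n → ℝ) i, esymm n (k - 1) (Function.update x i 0)
      = esymmOn (univ.erase i) (k - 1) x := fun x i => esymmOn_update_zero univ (k - 1) x i
  simp only [hupdate]
  refine ⟨mul_esymmOn_rpow_le_sum (by omega) hμ hγ, fun hγμ => ?_⟩
  subst hγμ
  have hμk : 0 < esymm n k μ := hμ k (by omega) le_rfl
  exact mul_esymmOn_rpow_eq_sum_of_eq_smul (by omega) hμk (Real.rpow_nonneg hμk.le _)

theorem stmt_14 (n k : ℕ) (hk2 : 2 ≤ k) (hkn : k ≤ n) (μ γ : Fin n → ℝ)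
    (hμ : ∀ j, 1 ≤ j → j ≤ k → 0 < esymm n j μ)
    (hγ : ∀ j, 1 ≤ j → j ≤ k → 0 < esymm n j γ) :
    (k : ℝ) * esymm n k μ ^ (1 / (k : ℝ)) * esymm n k γ ^ (((k : ℝ) - 1) / (k : ℝ))
      ≤ ∑ i, μ i * esymm n (k - 1) (Function.update γ i 0) ∧
    (γ = (fun i => esymm n k μ ^ (-(1 / (k : ℝ))) * μ i) →
      (k : ℝ) * esymm n k μ ^ (1 / (k : ℝ)) * esymm n k γ ^ (((k : ℝ) - 1) / (k : ℝ))
        = ∑ i, μ i * esymm n (k - 1) (Function.update γ i 0)) :=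
  stmt_14_general n k hk2 μ γ hμ hγ
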